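/- Let d ≥ 1 and let v : (0,∞) → [0,∞) be continuous with s ↦ v(s) s^{d/2+3} bounded and ∫₀^1 v(s) ds < ∞. Define q : ℝ^d × (0,∞) → [0,∞) by q(x,t) = √(w(t)) e^{−|x|²/(2t²)}, where w(t) = (1/(2π^{d/2})) t^{−d−3} v(1/(4t²)). Then for every x ∈ ℝ^d, ∫₀^∞ ∫_{ℝ^d} q(y,t) q(y−x,t) dy dt = ∫₀^∞ e^{−s|x|²} v(s) ds. -/

import Mathlib

/-!
For fixed `t > 0` the `y`-integrand is `w(t)` times two Gaussians of variance `t²` centred at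
`0` and `x`. Completing the square (the parallelogram law) turns their product into
`e^{-|x|²/(4t²)}` times a single Gaussian centred at `x/2`, whose integral `(π t²)^{d/2}` cancels
the normalisation of `w`; what remains is `t^{-3}/2 · v(1/(4t²)) e^{-|x|²/(4t²)}`, and the
substitution `s = 1/(4t²)` turns its integral over `t` into the right-hand side.
-/

open MeasureTheory

/-- The weight `w(t) = (1/(2 π^{d/2})) t^{-d-3} v(1/(4t²))`. -/
noncomputable def wfun (d : ℕ) (v : ℝ → ℝ) (t : ℝ) : ℝ :=
  (1 / (2 * Real.pi ^ ((d : ℝ) / 2))) * t ^ (-(d : ℝ) - 3) * v (1 / (4 * t ^ 2))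

/-- The kernel `q(x,t) = √(w(t)) e^{-|x|²/(2t²)}`. -/
noncomputable def qfun (d : ℕ) (v : ℝ → ℝ) (x : EuclideanSpace ℝ (Fin d)) (t : ℝ) : ℝ :=
  Real.sqrt (wfun d v t) * Real.exp (-‖x‖ ^ 2 / (2 * t ^ 2))

open Real Set

section Gaussian

variable {V : Type*} [NormedAddCommGroup V] [InnerProductSpace ℝ V]

lemma norm_sq_add_norm_sub_sq (x y : V) :
    ‖y‖ ^ 2 + ‖y - x‖ ^ 2 = 2 * ‖y - (2 : ℝ)⁻¹ • x‖ ^ 2 + ‖x‖ ^ 2 / 2 := by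
  have h := parallelogram_law_with_norm ℝ (y - (2 : ℝ)⁻¹ • x) ((2 : ℝ)⁻¹ • x)
  have hx : y - (2 : ℝ)⁻¹ • x - (2 : ℝ)⁻¹ • x = y - x := by
    rw [sub_sub, ← add_smul]; norm_num
  rw [sub_add_cancel, hx, norm_smul, mul_pow] at h
  norm_num at h
  linarith

variable [FiniteDimensional ℝ V] [MeasurableSpace V] [BorelSpace V]

lemma integral_exp_neg_mul_norm_sq_mul_exp_neg_mul_norm_sub_sq {b : ℝ} (hb : 0 < b) (x : V) :
    ∫ y : V, rexp (-b * ‖y‖ ^ 2) * rexp (-b * ‖y - x‖ ^ 2)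
      = (π / (2 * b)) ^ (Module.finrank ℝ V / 2 : ℝ) * rexp (-b / 2 * ‖x‖ ^ 2) := by
  have hsplit : ∀ y : V, rexp (-b * ‖y‖ ^ 2) * rexp (-b * ‖y - x‖ ^ 2)
      = rexp (-b / 2 * ‖x‖ ^ 2) * rexp (-(2 * b) * ‖y - (2 : ℝ)⁻¹ • x‖ ^ 2) := by
    intro y
    rw [← exp_add, ← exp_add]
    congr 1
    linear_combination (-b) * norm_sq_add_norm_sub_sq x y
  simp_rw [hsplit]
  rw [integral_const_mul,
    integral_sub_right_eq_self (fun z : V ↦ rexp (-(2 * b) * ‖z‖ ^ 2)),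
    GaussianFourier.integral_rexp_neg_mul_sq_norm (by positivity), mul_comm]

end Gaussian

lemma integral_Ioi_comp_inv_four_mul_sq {E : Type*} [NormedAddCommGroup E] [NormedSpace ℝ E]
    (g : ℝ → E) :
    ∫ t in Ioi 0, (t ^ (-3 : ℝ) / 2) • g (1 / (4 * t ^ 2)) = ∫ s in Ioi 0, g s := by
  calc ∫ t in Ioi 0, (t ^ (-3 : ℝ) / 2) • g (1 / (4 * t ^ 2))
      = ∫ t in Ioi 0, (|(-2 : ℝ)| * t ^ ((-2 : ℝ) - 1)) • ((4 : ℝ)⁻¹ • g (4⁻¹ * t ^ (-2 : ℝ))) := by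
        refine setIntegral_congr_fun measurableSet_Ioi fun t (ht : 0 < t) ↦ ?_
        rw [smul_smul, show (-2 : ℝ) - 1 = -3 by norm_num, rpow_neg ht.le, rpow_neg ht.le,
          rpow_two, abs_neg, abs_two]
        congr 1 <;> field_simp
        norm_num
    _ = ∫ u in Ioi 0, (4 : ℝ)⁻¹ • g (4⁻¹ * u) :=
        integral_comp_rpow_Ioi (fun u ↦ (4 : ℝ)⁻¹ • g (4⁻¹ * u)) (by norm_num)
    _ = ∫ s in Ioi 0, g s := by
        rw [integral_smul, integral_comp_mul_left_Ioi' g 0 (by norm_num), mul_zero]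

lemma wfun_mul_rpow {d : ℕ} {v : ℝ → ℝ} {t : ℝ} (ht : 0 < t) :
    wfun d v t * (π * t ^ 2) ^ ((d : ℝ) / 2) = t ^ (-3 : ℝ) / 2 * v (1 / (4 * t ^ 2)) := by
  have hsq : (t ^ 2) ^ ((d : ℝ) / 2) = t ^ (d : ℝ) := by
    rw [← rpow_natCast, ← rpow_mul ht.le]
    ring_nf
  have hsub : t ^ (-(d : ℝ) - 3) = t ^ (-3 : ℝ) / t ^ (d : ℝ) := by
    rw [← rpow_sub ht]
    ring_nf
  rw [wfun, mul_rpow pi_pos.le (sq_nonneg t), hsq, hsub]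
  field_simp

lemma wfun_nonneg {d : ℕ} {v : ℝ → ℝ} (hv : ∀ s : ℝ, 0 < s → 0 ≤ v s) {t : ℝ} (ht : 0 < t) :
    0 ≤ wfun d v t := by
  have := hv _ (by positivity : 0 < 1 / (4 * t ^ 2))
  unfold wfun
  positivity

lemma integral_qfun_mul_qfun_sub {d : ℕ} {v : ℝ → ℝ} {t : ℝ} (ht : 0 < t) (hw : 0 ≤ wfun d v t)
    (x : EuclideanSpace ℝ (Fin d)) :
    ∫ y, qfun d v y t * qfun d v (y - x) t
      = wfun d v t * (π * t ^ 2) ^ ((d : ℝ) / 2) * rexp (-(1 / (4 * t ^ 2)) * ‖x‖ ^ 2) := by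
  have hq : ∀ y, qfun d v y t * qfun d v (y - x) t = wfun d v t *
      (rexp (-(2 * t ^ 2)⁻¹ * ‖y‖ ^ 2) * rexp (-(2 * t ^ 2)⁻¹ * ‖y - x‖ ^ 2)) := by
    intro y
    rw [qfun, qfun, mul_mul_mul_comm, mul_self_sqrt hw]
    congr 3 <;> ring
  simp_rw [hq]
  rw [integral_const_mul, integral_exp_neg_mul_norm_sq_mul_exp_neg_mul_norm_sub_sq (by positivity),
    finrank_euclideanSpace_fin, mul_assoc]
  congr 4 <;> field_simp
  ring

theorem statement17_general (d : ℕ) (v : ℝ → ℝ)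
    (hv_nonneg : ∀ s : ℝ, 0 < s → 0 ≤ v s) :
    ∀ x : EuclideanSpace ℝ (Fin d),
      (∫ t in Set.Ioi (0:ℝ), ∫ y : EuclideanSpace ℝ (Fin d),
          qfun d v y t * qfun d v (y - x) t) =
        ∫ s in Set.Ioi (0:ℝ), Real.exp (-s * ‖x‖ ^ 2) * v s := by
  intro x
  calc ∫ t in Ioi 0, ∫ y, qfun d v y t * qfun d v (y - x) t
      = ∫ t in Ioi 0, (t ^ (-3 : ℝ) / 2) •
          (rexp (-(1 / (4 * t ^ 2)) * ‖x‖ ^ 2) * v (1 / (4 * t ^ 2))) := by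
        refine setIntegral_congr_fun measurableSet_Ioi fun t (ht : 0 < t) ↦ ?_
        rw [integral_qfun_mul_qfun_sub ht (wfun_nonneg hv_nonneg ht), wfun_mul_rpow ht, smul_eq_mul]
        ring
    _ = ∫ s in Ioi 0, rexp (-s * ‖x‖ ^ 2) * v s :=
        integral_Ioi_comp_inv_four_mul_sq fun s ↦ rexp (-s * ‖x‖ ^ 2) * v s

/-- for `v : (0,∞) → [0,∞)` continuous with `v(s) s^{d/2+3}` bounded and
`∫₀^1 v < ∞`, the kernel `q(x,t) = √(w(t)) e^{-|x|²/(2t²)}` satisfies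
`∫₀^∞ ∫_{ℝ^d} q(y,t) q(y-x,t) dy dt = ∫₀^∞ e^{-s|x|²} v(s) ds` for every `x ∈ ℝ^d`. -/
theorem statement17 (d : ℕ) (hd : 1 ≤ d) (v : ℝ → ℝ)
    (hv_cont : ContinuousOn v (Set.Ioi 0))
    (hv_nonneg : ∀ s : ℝ, 0 < s → 0 ≤ v s)
    (hv_bdd : ∃ C : ℝ, ∀ s : ℝ, 0 < s → v s * s ^ ((d : ℝ) / 2 + 3) ≤ C)
    (hv_int : IntegrableOn v (Set.Ioc 0 1)) :
    ∀ x : EuclideanSpace ℝ (Fin d),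
      (∫ t in Set.Ioi (0:ℝ), ∫ y : EuclideanSpace ℝ (Fin d),
          qfun d v y t * qfun d v (y - x) t) =
        ∫ s in Set.Ioi (0:ℝ), Real.exp (-s * ‖x‖ ^ 2) * v s :=
  statement17_general d v hv_nonneg
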